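/- Let K be a finite set with |K| elements k_1,...,k_{|K|}, and let (p_i) and (p̄_i) be two probability vectors on K with cumulative sums a_j = Σ_{i≤j} p_i and ā_j = Σ_{i≤j} p̄_i (a_0 = ā_0 = 0). Let U be uniform on [0,1] and define X = k_j when a_{j-1} < U ≤ a_j, and X̄ = k_j when ā_{j-1} < U ≤ ā_j. Then P(X ≠ X̄) ≤ Σ_{j=1}^{|K|-1} |a_j − ā_j|. -/
import Mathlib


open MeasureTheory

/-- Lemma (inverse-CDF coupling): if `X` and `X̄` are the inverse-CDF samples of two probability
vectors `p`, `p̄` on a finite set `K = {k 0, …, k (m-1)}` built from the same uniform `U`, with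
cumulative sums `a j = Σ_{i<j} p i` and `ā j = Σ_{i<j} p̄ i`, then
`ℙ(X ≠ X̄) ≤ Σ_{j=1}^{m-1} |a j − ā j|`. -/
theorem inverse_cdf_coupling
    {Ω : Type*} [MeasurableSpace Ω] (μ : Measure Ω) [IsProbabilityMeasure μ]
    {K : Type*} (m : ℕ) (hm : 1 ≤ m) (k : ℕ → K)
    (p p' : ℕ → ℝ)
    (hp : ∀ i, i < m → 0 ≤ p i) (hp' : ∀ i, i < m → 0 ≤ p' i)
    (hsum : ∑ i ∈ Finset.range m, p i = 1) (hsum' : ∑ i ∈ Finset.range m, p' i = 1)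
    (U : Ω → ℝ) (hUmeas : Measurable U)
    (hUunif : ∀ c d : ℝ, 0 ≤ c → d ≤ 1 → c ≤ d →
      μ {ω | c < U ω ∧ U ω ≤ d} = ENNReal.ofReal (d - c))
    -- cumulative distribution functions
    (a a' : ℕ → ℝ)
    (ha : ∀ j, a j = ∑ i ∈ Finset.range j, p i)
    (ha' : ∀ j, a' j = ∑ i ∈ Finset.range j, p' i)
    -- inverse-CDF samples using the same uniform `U`
    (X X' : Ω → K)
    (hX : ∀ ω, ∀ j, j < m → a j < U ω → U ω ≤ a (j + 1) → X ω = k j)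
    (hX' : ∀ ω, ∀ j, j < m → a' j < U ω → U ω ≤ a' (j + 1) → X' ω = k j) :
    μ {ω | X ω ≠ X' ω} ≤ ENNReal.ofReal (∑ j ∈ Finset.Icc 1 (m - 1), |a j - a' j|) := by
  classical
  have hmono : ∀ i j, i ≤ j → j ≤ m → a i ≤ a j := by
    intro i j hij hjm
    rw [ha, ha]
    exact Finset.sum_le_sum_of_subset_of_nonneg (Finset.range_subset_range.2 hij)
      (fun x hx _ => hp x (lt_of_lt_of_le (Finset.mem_range.1 hx) hjm))
  have hmono' : ∀ i j, i ≤ j → j ≤ m → a' i ≤ a' j := by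
    intro i j hij hjm
    rw [ha', ha']
    exact Finset.sum_le_sum_of_subset_of_nonneg (Finset.range_subset_range.2 hij)
      (fun x hx _ => hp' x (lt_of_lt_of_le (Finset.mem_range.1 hx) hjm))
  have ha0 : a 0 = 0 := by simp [ha]
  have ha'0 : a' 0 = 0 := by simp [ha']
  have ham : a m = 1 := by rw [ha]; exact hsum
  have ha'm : a' m = 1 := by rw [ha']; exact hsum'
  have hbd : ∀ j, j ≤ m → 0 ≤ a j ∧ a j ≤ 1 := fun j hj =>
    ⟨by rw [← ha0]; exact hmono 0 j (Nat.zero_le _) hj,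
     by rw [← ham]; exact hmono j m hj le_rfl⟩
  have hbd' : ∀ j, j ≤ m → 0 ≤ a' j ∧ a' j ≤ 1 := fun j hj =>
    ⟨by rw [← ha'0]; exact hmono' 0 j (Nat.zero_le _) hj,
     by rw [← ha'm]; exact hmono' j m hj le_rfl⟩
  -- localization: each u ∈ (0,1] lies in some interval
  have exj : ∀ (b : ℕ → ℝ), b 0 = 0 → b m = 1 → ∀ u : ℝ, 0 < u → u ≤ 1 →
      ∃ j, j < m ∧ b j < u ∧ u ≤ b (j + 1) := by
    intro b hb0 hbm u hu0 hu1
    have hP : ∃ n, u ≤ b n := ⟨m, by rw [hbm]; exact hu1⟩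
    have hJle : Nat.find hP ≤ m := Nat.find_le (by rw [hbm]; exact hu1)
    have hJpos : 0 < Nat.find hP := by
      rcases Nat.eq_zero_or_pos (Nat.find hP) with h | h
      · exfalso
        have := Nat.find_spec hP
        rw [h, hb0] at this
        linarith
      · exact h
    refine ⟨Nat.find hP - 1, by omega, ?_, ?_⟩
    · have := Nat.find_min hP (m := Nat.find hP - 1) (by omega)
      exact lt_of_not_ge this
    · have h1 : Nat.find hP - 1 + 1 = Nat.find hP := by omega
      rw [h1]; exact Nat.find_spec hP
  set A := {ω : Ω | 0 < U ω ∧ U ω ≤ 1} with hA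
  have hAmeas : MeasurableSet A :=
    (measurableSet_lt measurable_const hUmeas).inter (measurableSet_le hUmeas measurable_const)
  have hAfull : μ A = 1 := by
    have := hUunif 0 1 le_rfl le_rfl zero_le_one
    simpa using this
  have hAc0 : μ Aᶜ = 0 := by
    rw [measure_compl hAmeas (measure_ne_top μ A), hAfull, measure_univ, tsub_self]
  set B : ℕ → Set Ω := fun i => {ω | min (a i) (a' i) < U ω ∧ U ω ≤ max (a i) (a' i)} with hB
  have hsub : {ω | X ω ≠ X' ω} ⊆ Aᶜ ∪ ⋃ i ∈ Finset.Icc 1 (m - 1), B i := by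
    intro ω hω
    by_cases hAω : ω ∈ A
    · right
      obtain ⟨j, hjm, hj1, hj2⟩ := exj a ha0 ham (U ω) hAω.1 hAω.2
      obtain ⟨j', hjm', hj1', hj2'⟩ := exj a' ha'0 ha'm (U ω) hAω.1 hAω.2
      have hXω := hX ω j hjm hj1 hj2
      have hX'ω := hX' ω j' hjm' hj1' hj2'
      have hne : j ≠ j' := by
        intro h
        exact hω (by rw [hXω, hX'ω, h])
      simp only [Set.mem_iUnion, exists_prop]
      rcases lt_or_gt_of_ne hne with h | h
      · refine ⟨j + 1, Finset.mem_Icc.2 ⟨by omega, by omega⟩, ?_, ?_⟩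
        · have h1 : a' (j + 1) ≤ a' j' := hmono' (j + 1) j' h (le_of_lt hjm')
          exact lt_of_le_of_lt (le_trans (min_le_right _ _) h1) hj1'
        · exact le_trans hj2 (le_max_left _ _)
      · refine ⟨j' + 1, Finset.mem_Icc.2 ⟨by omega, by omega⟩, ?_, ?_⟩
        · have h1 : a (j' + 1) ≤ a j := hmono (j' + 1) j h (le_of_lt hjm)
          exact lt_of_le_of_lt (le_trans (min_le_left _ _) h1) hj1
        · exact le_trans hj2' (le_max_right _ _)
    · left; exact hAω
  have hBmeas : ∀ i ∈ Finset.Icc 1 (m - 1), μ (B i) = ENNReal.ofReal |a i - a' i| := by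
    intro i hi
    have him : i ≤ m := by
      have := (Finset.mem_Icc.1 hi).2; omega
    have h0 : (0 : ℝ) ≤ min (a i) (a' i) := le_min (hbd i him).1 (hbd' i him).1
    have h1 : max (a i) (a' i) ≤ 1 := max_le (hbd i him).2 (hbd' i him).2
    have h2 : min (a i) (a' i) ≤ max (a i) (a' i) := min_le_max
    rw [hUunif _ _ h0 h1 h2, max_sub_min_eq_abs, abs_sub_comm]
  calc μ {ω | X ω ≠ X' ω}
      ≤ μ (Aᶜ ∪ ⋃ i ∈ Finset.Icc 1 (m - 1), B i) := measure_mono hsub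
    _ ≤ μ Aᶜ + μ (⋃ i ∈ Finset.Icc 1 (m - 1), B i) := measure_union_le _ _
    _ = μ (⋃ i ∈ Finset.Icc 1 (m - 1), B i) := by rw [hAc0, zero_add]
    _ ≤ ∑ i ∈ Finset.Icc 1 (m - 1), μ (B i) := measure_biUnion_finset_le _ _
    _ = ∑ i ∈ Finset.Icc 1 (m - 1), ENNReal.ofReal |a i - a' i| :=
        Finset.sum_congr rfl hBmeas
    _ = ENNReal.ofReal (∑ j ∈ Finset.Icc 1 (m - 1), |a j - a' j|) :=
        (ENNReal.ofReal_sum_of_nonneg (fun i _ => abs_nonneg _)).symm
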